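/- Under the projected gradient descent iteration on m̄ with T = 1/β² − 1 rounds and η = β = 1/√(T+1), if at every round t the chosen set R^t satisfies |m̄^t(R^t) − ℓ(R^t)| ≥ β/P(R^t) and ψ^t = sign(m̄^t(R^t) − ℓ(R^t)), then the final predictor m̄^{T+1} satisfies |m̄^{T+1}(R) − ℓ(R)| ≤ β/P(R) for every set R of positive measure. -/

import Mathlib

open Finset

lemma clamp_sq_le (a l : ℝ) (h0 : 0 ≤ l) (h1 : l ≤ 1) :
    (min (max a 0) 1 - l)^2 ≤ (a - l)^2 := by
  simp only [min_def, max_def]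
  split_ifs <;> nlinarith

/-- If projected gradient descent on the moment predictor is run for `T = 1/β² - 1`
rounds with `η = β = 1/√(T+1)`, each round's set `R_t` witnessing a `β`-consistency
violation `|m̄_t(R_t) - ℓ(R_t)| ≥ β / P(R_t)` with `ψ_t = sign(m̄_t(R_t) - ℓ(R_t))`,
then the final predictor satisfies `|m̄_T(R) - ℓ(R)| ≤ β / P(R)` for every
positive-measure set `R`. -/
theorem pgd_pseudo_moment_consistency {X : Type*} [Fintype X] [DecidableEq X]
    (p : X → ℝ) (hp : ∀ x, 0 ≤ p x) (hp1 : ∑ x, p x = 1)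
    (ℓ : X → ℝ) (hℓ : ∀ x, ℓ x ∈ Set.Icc (0:ℝ) 1)
    (T : ℕ) (β : ℝ) (hβ : β = 1 / Real.sqrt (T + 1))
    (R : ℕ → Finset X) (ψ : ℕ → ℝ)
    (hRpos : ∀ t, 0 < ∑ x ∈ R t, p x)
    (mbar : ℕ → X → ℝ) (hinit : ∀ x, mbar 0 x ∈ Set.Icc (0:ℝ) 1)
    (hupd : ∀ t x, mbar (t + 1) x =
      if x ∈ R t then min (max (mbar t x - β * ψ t) 0) 1 else mbar t x)
    (hsign : ∀ t < T, ψ t = Real.sign ((∑ x ∈ R t, p x * mbar t x) / (∑ x ∈ R t, p x) -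
      (∑ x ∈ R t, p x * ℓ x) / (∑ x ∈ R t, p x)))
    (hviol : ∀ t < T, β / (∑ x ∈ R t, p x) ≤
      |(∑ x ∈ R t, p x * mbar t x) / (∑ x ∈ R t, p x) -
        (∑ x ∈ R t, p x * ℓ x) / (∑ x ∈ R t, p x)|) :
    ∀ R' : Finset X, 0 < ∑ x ∈ R', p x →
      |(∑ x ∈ R', p x * mbar T x) / (∑ x ∈ R', p x) -
        (∑ x ∈ R', p x * ℓ x) / (∑ x ∈ R', p x)| ≤ β / (∑ x ∈ R', p x) := by
  intro R' hR'
  have hT1 : (0:ℝ) < (T:ℝ) + 1 := by positivity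
  have hβpos : 0 < β := by
    rw [hβ]; positivity
  have hβsq : β^2 = 1/((T:ℝ)+1) := by
    rw [hβ, div_pow, one_pow, Real.sq_sqrt hT1.le]
  set Φ : ℕ → ℝ := fun t => ∑ x, p x * (mbar t x - ℓ x)^2 with hΦdef
  have hPle1 : ∀ s : Finset X, ∑ x ∈ s, p x ≤ 1 := by
    intro s; rw [← hp1]
    exact Finset.sum_le_sum_of_subset_of_nonneg (subset_univ s) (fun x _ _ => hp x)
  -- the division identity
  have hdiv : ∀ (s : Finset X),
      (∑ x ∈ s, p x * mbar T x) / (∑ x ∈ s, p x) -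
        (∑ x ∈ s, p x * ℓ x) / (∑ x ∈ s, p x)
      = (∑ x ∈ s, p x * (mbar T x - ℓ x)) / (∑ x ∈ s, p x) := by
    intro s
    rw [div_sub_div_same]
    congr 1
    rw [← Finset.sum_sub_distrib]
    exact Finset.sum_congr rfl (fun x _ => by ring)
  -- per-round potential decrease
  have hstep : ∀ t, t < T → Φ (t+1) ≤ Φ t - β^2 := by
    intro t ht
    have hPpos := hRpos t
    set P := ∑ x ∈ R t, p x with hP
    set S := ∑ x ∈ R t, p x * (mbar t x - ℓ x) with hS
    have hSP : (∑ x ∈ R t, p x * mbar t x) / P - (∑ x ∈ R t, p x * ℓ x) / P = S / P := by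
      rw [div_sub_div_same]
      congr 1
      rw [hS, ← Finset.sum_sub_distrib]
      exact Finset.sum_congr rfl (fun x _ => by ring)
    have hviolS : β ≤ |S| := by
      have hv := hviol t ht
      rw [hSP, abs_div, abs_of_pos hPpos] at hv
      exact (div_le_div_iff_of_pos_right hPpos).mp hv
    have hSne : S ≠ 0 := by
      intro h; rw [h, abs_zero] at hviolS; linarith
    have hψS : ψ t * S = |S| := by
      have hs := hsign t ht
      rw [hSP] at hs
      rcases lt_or_gt_of_ne hSne with h | h
      · rw [hs, Real.sign_of_neg (div_neg_of_neg_of_pos h hPpos), abs_of_neg h]; ring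
      · rw [hs, Real.sign_of_pos (div_pos h hPpos), abs_of_pos h]; ring
    have hψ2 : ψ t ^ 2 = 1 := by
      have hs := hsign t ht
      rw [hSP] at hs
      rcases lt_or_gt_of_ne hSne with h | h
      · rw [hs, Real.sign_of_neg (div_neg_of_neg_of_pos h hPpos)]; norm_num
      · rw [hs, Real.sign_of_pos (div_pos h hPpos)]; norm_num
    have hpt : ∀ x : X, p x * (mbar (t+1) x - ℓ x)^2 ≤
        p x * (if x ∈ R t then (mbar t x - β * ψ t - ℓ x)^2 else (mbar t x - ℓ x)^2) := by
      intro x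
      rw [hupd]
      split_ifs with hx
      · exact mul_le_mul_of_nonneg_left (clamp_sq_le _ _ (hℓ x).1 (hℓ x).2) (hp x)
      · exact le_rfl
    have hsum : ∑ x, p x * (if x ∈ R t then (mbar t x - β * ψ t - ℓ x)^2
          else (mbar t x - ℓ x)^2)
        = Φ t + ∑ x ∈ R t, p x * (β^2 * ψ t^2 - 2*β*ψ t*(mbar t x - ℓ x)) := by
      have e1 : ∀ x : X, p x * (if x ∈ R t then (mbar t x - β * ψ t - ℓ x)^2
            else (mbar t x - ℓ x)^2)
          = p x * (mbar t x - ℓ x)^2 +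
            (if x ∈ R t then p x * (β^2 * ψ t^2 - 2*β*ψ t*(mbar t x - ℓ x)) else 0) := by
        intro x; split_ifs <;> ring
      rw [Finset.sum_congr rfl (fun x _ => e1 x), Finset.sum_add_distrib,
        Finset.sum_ite_mem, Finset.univ_inter]
    have e2 : ∑ x ∈ R t, p x * (β^2 * ψ t^2 - 2*β*ψ t*(mbar t x - ℓ x))
        = β^2 * ψ t^2 * P - 2*β*(ψ t * S) := by
      rw [hP, hS, Finset.mul_sum, Finset.mul_sum, Finset.mul_sum, ← Finset.sum_sub_distrib]
      exact Finset.sum_congr rfl (fun x _ => by ring)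
    have hbound : β^2 * ψ t^2 * P - 2*β*(ψ t * S) ≤ -β^2 := by
      rw [hψ2, hψS]
      have h1 : β^2 * 1 * P ≤ β^2 := by nlinarith [hPle1 (R t), sq_nonneg β]
      have h2 : 2*β*β ≤ 2*β*|S| := by nlinarith
      nlinarith
    calc Φ (t+1) ≤ ∑ x, p x * (if x ∈ R t then (mbar t x - β * ψ t - ℓ x)^2
          else (mbar t x - ℓ x)^2) := Finset.sum_le_sum (fun x _ => hpt x)
      _ = Φ t + (β^2 * ψ t^2 * P - 2*β*(ψ t * S)) := by rw [hsum, e2]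
      _ ≤ Φ t - β^2 := by linarith
  -- telescoping
  have key : ∀ t, t ≤ T → Φ t ≤ Φ 0 - t * β^2 := by
    intro t
    induction t with
    | zero => intro _; simp
    | succ n ih =>
      intro h
      have h1 : n < T := h
      have h2 := hstep n h1
      have h3 := ih (le_of_lt h1)
      push_cast
      linarith
  have hΦ0 : Φ 0 ≤ 1 := by
    rw [← hp1]
    apply Finset.sum_le_sum
    intro x _
    have h0 := hinit x
    have h1 := hℓ x
    have hd : (mbar 0 x - ℓ x)^2 ≤ 1 := by nlinarith [h0.1, h0.2, h1.1, h1.2]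
    calc p x * (mbar 0 x - ℓ x)^2 ≤ p x * 1 := mul_le_mul_of_nonneg_left hd (hp x)
      _ = p x := mul_one _
  have hΦT : Φ T ≤ β^2 := by
    have h1 := key T le_rfl
    have h2 : (T:ℝ) * β^2 + β^2 = 1 := by
      rw [hβsq]; field_simp
    linarith
  -- final test set
  set P' := ∑ x ∈ R', p x with hP'
  set S' := ∑ x ∈ R', p x * (mbar T x - ℓ x) with hS'
  have hQ : ∑ x ∈ R', p x * (mbar T x - ℓ x)^2 ≤ Φ T :=
    Finset.sum_le_sum_of_subset_of_nonneg (subset_univ R')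
      (fun x _ _ => mul_nonneg (hp x) (sq_nonneg _))
  have hexp : ∀ c : ℝ, 0 ≤ (∑ x ∈ R', p x * (mbar T x - ℓ x)^2) - 2*c*S' + c^2*P' := by
    intro c
    have e : (∑ x ∈ R', p x * (mbar T x - ℓ x)^2) - 2*c*S' + c^2*P'
        = ∑ x ∈ R', p x * (mbar T x - ℓ x - c)^2 := by
      rw [hS', hP', Finset.mul_sum, Finset.mul_sum, ← Finset.sum_sub_distrib,
        ← Finset.sum_add_distrib]
      exact Finset.sum_congr rfl (fun x _ => by ring)
    rw [e]
    exact Finset.sum_nonneg (fun x _ => mul_nonneg (hp x) (sq_nonneg _))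
  have habs : 2*β*|S'| ≤ (∑ x ∈ R', p x * (mbar T x - ℓ x)^2) + β^2*P' := by
    have h1 := hexp β
    have h2 := hexp (-β)
    rcases abs_cases S' with ⟨he, _⟩ | ⟨he, _⟩ <;> rw [he] <;> nlinarith
  have hS'le : |S'| ≤ β := by
    have h1 : 2*β*|S'| ≤ 2*β*β := by
      have h3 : β^2*P' ≤ β^2 := by nlinarith [hPle1 R', sq_nonneg β]
      nlinarith
    exact le_of_mul_le_mul_left h1 (by linarith)
  rw [hdiv R', abs_div, abs_of_pos hR']
  exact div_le_div_of_nonneg_right hS'le hR'.le |>.trans_eq rfl
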